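/- Let T ∈ T^(m)(n) and let X = (v_1, …, v_k) be an S-connected cadet sequence of T with maximal S-cadet sequences X_1, …, X_{k'} listed in increasing order of the index of their last node. If X has nonzero contribution r_S(X) ≠ 0 and k' > 1, then |X_1 \ X_2| = 1 and |X_{k'} \ X_{k'−1}| = 1. -/

import Mathlib

open scoped Classical

/-- The derived sets `S⁻ᵢⱼ` of nonnegative integers:
for `i < j`, `S⁻ᵢⱼ = {s ≥ 0 : -s ∈ Sᵢⱼ}`, and `S⁻ⱼᵢ = {0} ∪ {s > 0 : s ∈ Sᵢⱼ}`. -/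
def Sminus {n : ℕ} (S : Fin n → Fin n → Finset ℤ) (i j : Fin n) : Set ℕ :=
  if i < j then {s : ℕ | -(s : ℤ) ∈ S i j}
  else {0} ∪ {s : ℕ | 0 < s ∧ (s : ℤ) ∈ S j i}

/-- `m`: the maximal absolute value of an element of some `S i j` (`i < j`). -/
def mOf {n : ℕ} (S : Fin n → Fin n → Finset ℤ) : ℕ :=
  Finset.univ.sup fun p : Fin n × Fin n =>
    if p.1 < p.2 then (S p.1 p.2).sup (fun s => s.natAbs) else 0

/-- A rooted labeled plane tree with `n` nodes (labeled by `Fin n`, index `i` representing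
the label `i+1`, so the node `1` is `(0 : Fin n)`), each node having exactly `m+1`
linearly ordered children; children that are not nodes are unlabeled leaves and carry no
further data. `parent v` is the parent node of the node `v` (with the convention
`parent root = root`), and `pos v` is the position of `v` among the `m+1` children of its
parent, so `(pos v : ℕ)` is the number `lsib v` of left siblings of `v`. -/
structure PlaneTree (n m : ℕ) where
  root : Fin n
  parent : Fin n → Fin n
  pos : Fin n → Fin (m + 1)
  parent_root : parent root = root
  reaches_root : ∀ v : Fin n, ∃ k : ℕ, parent^[k] v = root
  pos_inj : ∀ v w : Fin n, v ≠ root → w ≠ root → parent v = parent w → pos v = pos w → v = w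

namespace PlaneTree

variable {n m : ℕ}

/-- `v` is a child of `u` (among the nodes). -/
def IsChild (T : PlaneTree n m) (v u : Fin n) : Prop :=
  v ≠ T.root ∧ T.parent v = u

/-- `v` is the cadet of `u`: the rightmost child of `u` that is a node. -/
def IsCadet (T : PlaneTree n m) (u v : Fin n) : Prop :=
  T.IsChild v u ∧ ∀ w : Fin n, T.IsChild w u → T.pos w ≤ T.pos v

/-- The number of left siblings of `v`. -/
def lsib (T : PlaneTree n m) (v : Fin n) : ℕ := (T.pos v : ℕ)

end PlaneTree

/-- `(v a, v (a+1), …, v b)` is a cadet sequence of `T` (1-indexed, `1 ≤ a ≤ b`). -/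
def IsCadetWindow {n m : ℕ} (T : PlaneTree n m) (v : ℕ → Fin n) (a b : ℕ) : Prop :=
  1 ≤ a ∧ a ≤ b ∧ ∀ p : ℕ, a < p → p ≤ b → T.IsCadet (v (p - 1)) (v p)

/-- `v` is injective on the indices `a, …, b`. -/
def WindowInj {n : ℕ} (v : ℕ → Fin n) (a b : ℕ) : Prop :=
  ∀ p q : ℕ, a ≤ p → p ≤ b → a ≤ q → q ≤ b → v p = v q → p = q

/-- `(v a, …, v b)` is an `S`-cadet sequence of `T`. -/
def IsSCadetWindow {n m : ℕ} (S : Fin n → Fin n → Finset ℤ) (T : PlaneTree n m)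
    (v : ℕ → Fin n) (a b : ℕ) : Prop :=
  IsCadetWindow T v a b ∧
    ∀ i j : ℕ, a ≤ i → i < j → j ≤ b →
      (∑ p ∈ Finset.Icc (i + 1) j, T.lsib (v p)) ∉ Sminus S (v i) (v j)

/-- `(v 1, …, v k)` is a maximal cadet sequence of `T`: all children of `v k` are
leaves, and no node has `v 1` as its cadet. -/
def IsMaxCadetSeq {n m : ℕ} (T : PlaneTree n m) (k : ℕ) (v : ℕ → Fin n) : Prop :=
  IsCadetWindow T v 1 k ∧ (∀ w : Fin n, ¬ T.IsChild w (v k)) ∧ ∀ u : Fin n, ¬ T.IsCadet u (v 1)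

/-- `(v a, …, v b)` is a maximal `S`-cadet sequence inside the ambient cadet sequence
`(v 1, …, v k)`. -/
def IsMaxSCadetWindow {n m : ℕ} (S : Fin n → Fin n → Finset ℤ) (T : PlaneTree n m)
    (k : ℕ) (v : ℕ → Fin n) (a b : ℕ) : Prop :=
  b ≤ k ∧ IsSCadetWindow S T v a b ∧
    (a = 1 ∨ ¬ IsSCadetWindow S T v (a - 1) b) ∧
    (b = k ∨ ¬ IsSCadetWindow S T v a (b + 1))

/-- `Y` is (the set of nodes of) a maximal `S`-cadet sequence of `T`. -/
def IsMaxSCadetSet {n m : ℕ} (S : Fin n → Fin n → Finset ℤ) (T : PlaneTree n m)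
    (Y : Finset (Fin n)) : Prop :=
  ∃ (k : ℕ) (v : ℕ → Fin n) (a b : ℕ), IsMaxCadetSeq T k v ∧ WindowInj v 1 k ∧
    IsMaxSCadetWindow S T k v a b ∧ Y = (Finset.Icc a b).image v

/-- `Y` is (the set of nodes of) a nonempty cadet sequence of `T`. -/
def IsCadetSeqSet {n m : ℕ} (T : PlaneTree n m) (Y : Finset (Fin n)) : Prop :=
  ∃ (k : ℕ) (v : ℕ → Fin n), IsCadetWindow T v 1 k ∧ WindowInj v 1 k ∧
    Y = (Finset.Icc 1 k).image v

/-- `X` is (the set of nodes of) an `S`-connected cadet sequence of `T`: it is a cadet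
sequence, every maximal `S`-cadet sequence is disjoint from it or contained in it, and no
cadet sequence with this property is properly contained in it. -/
def SConnected {n m : ℕ} (S : Fin n → Fin n → Finset ℤ) (T : PlaneTree n m)
    (X : Finset (Fin n)) : Prop :=
  IsCadetSeqSet T X ∧
    (∀ Y, IsMaxSCadetSet S T Y → X ∩ Y = ∅ ∨ Y ⊆ X) ∧
    ∀ X', IsCadetSeqSet T X' → (∀ Y, IsMaxSCadetSet S T Y → X' ∩ Y = ∅ ∨ Y ⊆ X') →
      X' ⊆ X → X' = X

/-- `Y` is (the set of nodes of) an `S`-cadet sequence of `T` (a possible box). -/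
def IsSBox {n m : ℕ} (S : Fin n → Fin n → Finset ℤ) (T : PlaneTree n m)
    (Y : Finset (Fin n)) : Prop :=
  ∃ (k : ℕ) (v : ℕ → Fin n), IsSCadetWindow S T v 1 k ∧ WindowInj v 1 k ∧
    Y = (Finset.Icc 1 k).image v

/-- `B` is an `S`-boxing of the set of nodes `X`: a partition of `X` into
`S`-cadet sequences. -/
def IsSBoxingOf {n m : ℕ} (S : Fin n → Fin n → Finset ℤ) (T : PlaneTree n m)
    (X : Finset (Fin n)) (B : Finset (Finset (Fin n))) : Prop :=
  (∀ Y ∈ B, IsSBox S T Y ∧ Y ⊆ X) ∧ ∀ u ∈ X, ∃! Y, Y ∈ B ∧ u ∈ Y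

/-- The contribution `r_S(X)` of a cadet sequence with (injective) node set `X`
(whose length is `X.card`): `∑_{B ∈ U_S(X)} (-1)^(|X| - |B|)`. -/
noncomputable def contrib {n m : ℕ} (S : Fin n → Fin n → Finset ℤ) (T : PlaneTree n m)
    (X : Finset (Fin n)) : ℤ :=
  ∑ B : Finset (Finset (Fin n)),
    if IsSBoxingOf S T X B then (-1 : ℤ) ^ (X.card - B.card) else 0

/-- The contribution `r_S(T) = ∑_{B ∈ U_S(T)} (-1)^(n - |B|)` of the tree `T`. -/
noncomputable def treeContrib {n m : ℕ} (S : Fin n → Fin n → Finset ℤ)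
    (T : PlaneTree n m) : ℤ :=
  contrib S T Finset.univ

/-- The tuple `S` is transitive. -/
def TransitiveS {n : ℕ} (S : Fin n → Fin n → Finset ℤ) : Prop :=
  ∀ i j k : Fin n, i ≠ j → j ≠ k → i ≠ k →
    ∀ s t : ℕ, s ∉ Sminus S i j → t ∉ Sminus S j k → s + t ∉ Sminus S i k

/-- The arrangement `A_S` is almost transitive (`(i : ℕ) = 0` encodes "`i` is the node `1`"). -/
def AlmostTransitive {n : ℕ} (S : Fin n → Fin n → Finset ℤ) : Prop :=
  ∀ i j k : Fin n, i ≠ j → j ≠ k → i ≠ k → (i : ℕ) ≠ 0 → (k : ℕ) ≠ 0 →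
    ∀ s t : ℕ, s ∉ Sminus S i j → t ∉ Sminus S j k → s + t ∉ Sminus S i k

/-- `A_S` is an Ish-type arrangement: `0 ∈ Sᵢⱼ` for all `i < j`, and `Sᵢⱼ = {0}`
whenever `1 < i < j`. -/
def IshType {n : ℕ} (S : Fin n → Fin n → Finset ℤ) : Prop :=
  (∀ i j : Fin n, i < j → (0 : ℤ) ∈ S i j) ∧
    ∀ i j : Fin n, 0 < (i : ℕ) → i < j → S i j = {0}

/-- `A_S` is a nested Ish arrangement. -/
def NestedIsh {n : ℕ} (S : Fin n → Fin n → Finset ℤ) : Prop :=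
  IshType S ∧ ∀ i j k : Fin n, (i : ℕ) = 0 → 0 < (j : ℕ) → j < k → S i j ⊆ S i k

/-- The lower inefficiency `E_l(T)`: the number of lower inefficient nodes of `T`,
i.e. nodes `w` that are left siblings of the node `1` with `lsib w ∉ S⁻_{w,1}`. -/
noncomputable def Elow {n m : ℕ} [NeZero n] (S : Fin n → Fin n → Finset ℤ)
    (T : PlaneTree n m) : ℕ :=
  (Finset.univ.filter fun w : Fin n =>
    w ≠ T.root ∧ (0 : Fin n) ≠ T.root ∧ T.parent w = T.parent 0 ∧ T.pos w < T.pos 0 ∧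
      T.lsib w ∉ Sminus S w 0).card

/-- The upper inefficiency `E_u(T)`: the number of upper inefficient nodes of `T`,
i.e. nodes `w` with parent the node `1` that are not the cadet of `1`, with
`lsib w ∉ S⁻_{1,w}`. -/
noncomputable def Eup {n m : ℕ} [NeZero n] (S : Fin n → Fin n → Finset ℤ)
    (T : PlaneTree n m) : ℕ :=
  (Finset.univ.filter fun w : Fin n =>
    T.IsChild w 0 ∧ ¬ T.IsCadet 0 w ∧ T.lsib w ∉ Sminus S 0 w).card

/-- The class `S(e_l, ℓ_l, e_u, ℓ_u)` of trees in `T^(m)(n)` with nonzero contribution,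
lower/upper inefficiencies `e_l, e_u` and lower/upper 1-lengths `ℓ_l, ℓ_u` (the latter
expressed via the maximal `S`-cadet sequence `{v_{j-ℓ_l}, …, v_j, …, v_{j+ℓ_u}}`
around the node `1 = v j` inside its maximal cadet sequence `(v 1, …, v t)`). -/
def ClassS {n : ℕ} [NeZero n] (S : Fin n → Fin n → Finset ℤ) (el ll eu lu : ℕ) :
    Set (PlaneTree n (mOf S)) :=
  {T | treeContrib S T ≠ 0 ∧ Elow S T = el ∧ Eup S T = eu ∧
    ∃ (t : ℕ) (v : ℕ → Fin n) (j : ℕ), IsMaxCadetSeq T t v ∧ WindowInj v 1 t ∧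
      1 ≤ j ∧ j ≤ t ∧ v j = 0 ∧ ll < j ∧ j + lu ≤ t ∧
      IsMaxSCadetWindow S T t v (j - ll) (j + lu)}

/-- The complement in `ℝ^n` of the union of the hyperplanes `xᵢ - xⱼ = s`
(`i < j`, `s ∈ S i j`) of the arrangement `A_S`. -/
def complementSet {n : ℕ} (S : Fin n → Fin n → Finset ℤ) : Set (Fin n → ℝ) :=
  {x | ∀ i j : Fin n, i < j → ∀ s ∈ S i j, x i - x j ≠ (s : ℝ)}

/-- The number of regions `r_S` of the arrangement `A_S`: the number of connected
components of the complement of its hyperplanes. -/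
noncomputable def numRegions {n : ℕ} (S : Fin n → Fin n → Finset ℤ) : ℕ :=
  Nat.card (ConnectedComponents ↥(complementSet S))

/-- A rooted labeled plane tree with `n` nodes and arbitrary numbers of children:
`nchild u` is the total number of (linearly ordered) children of the node `u`, and
`pos v` the position of the node `v` among the children of its parent (so
`lsib v = pos v` and `rsib v = nchild (parent v) - 1 - pos v`). Children not occupied
by nodes are unlabeled leaves. -/
structure LPTree (n : ℕ) where
  root : Fin n
  parent : Fin n → Fin n
  pos : Fin n → ℕ
  nchild : Fin n → ℕ
  parent_root : parent root = root
  reaches_root : ∀ v : Fin n, ∃ k : ℕ, parent^[k] v = root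
  pos_lt : ∀ v : Fin n, v ≠ root → pos v < nchild (parent v)
  pos_inj : ∀ v w : Fin n, v ≠ root → w ≠ root → parent v = parent w → pos v = pos w → v = w

/-- Membership in the set `𝔗(S)`: the root is the node `1`, the node `1` has `2m+2`
children, every other node has exactly one child, and every node `k ≠ 1` satisfies
`lsib k ∈ S⁻₁ₖ` or `rsib k ∈ S⁻ₖ₁`. -/
def IsFrakT {n : ℕ} [NeZero n] (S : Fin n → Fin n → Finset ℤ) (T : LPTree n) : Prop :=
  T.root = 0 ∧ T.nchild 0 = 2 * mOf S + 2 ∧ (∀ v : Fin n, v ≠ 0 → T.nchild v = 1) ∧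
    ∀ v : Fin n, v ≠ 0 →
      (T.pos v ∈ Sminus S 0 v ∨ (T.nchild (T.parent v) - 1 - T.pos v) ∈ Sminus S v 0)

/-- For an `S`-connected cadet sequence `(v 1, …, v k)` whose maximal `S`-cadet
sequences are the windows `[a r, b r]` (`1 ≤ r ≤ k'`, in increasing order of last index),
`LastIdx a b k' j` is the index of the largest-indexed node of `X_j \ X_{j+1}`
(with `X_{k'+1} = {0}` containing no node of the sequence). -/
def LastIdx (a b : ℕ → ℕ) (k' j : ℕ) : ℕ :=
  ((Finset.Icc (a j) (b j)) \
    (if j = k' then (∅ : Finset ℕ) else Finset.Icc (a (j + 1)) (b (j + 1)))).sup id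

/-- `X_i` reaches `X_j`: the parent of the largest-indexed node of `X_j \ X_{j+1}`
belongs to `X_i`, with the conventions `X_0 = {0}`, `parent (v 1) = 0`
(the index `0` plays the role of `X_0`). -/
def Reaches (a b : ℕ → ℕ) (k' i j : ℕ) : Prop :=
  i < j ∧ j ≤ k' ∧
    ((i = 0 ∧ LastIdx a b k' j = 1) ∨
      (1 ≤ i ∧ 2 ≤ LastIdx a b k' j ∧ a i ≤ LastIdx a b k' j - 1 ∧
        LastIdx a b k' j - 1 ≤ b i))

/-- A successful run of the algorithm: `idx 0 = 0`; at each step, the next term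
`idx (j+1)` is the smallest-indexed maximal `S`-cadet sequence reached by `X_{idx j}`
but not reached by any `X_{idx l}` with `l < j`; the run terminates at `k'`
after `t` steps. -/
def AlgRun (a b : ℕ → ℕ) (k' t : ℕ) (idx : ℕ → ℕ) : Prop :=
  idx 0 = 0 ∧ idx t = k' ∧ (∀ j, j < t → idx j ≠ k') ∧
    ∀ j, j < t →
      Reaches a b k' (idx j) (idx (j + 1)) ∧
        (∀ l, l < j → ¬ Reaches a b k' (idx l) (idx (j + 1))) ∧
        ∀ r, r < idx (j + 1) → Reaches a b k' (idx j) r → ∃ l, l < j ∧ Reaches a b k' (idx l) r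

/-- Condition (2) of Proposition 4.5 (with lower 1-length `i` and upper 1-length `k`),
for the maximal cadet sequence `(v 1, …, v t)` containing the node `1 = v j`. -/
def Cond9 {n m : ℕ} (S : Fin n → Fin n → Finset ℤ) (T : PlaneTree n m)
    (t : ℕ) (v : ℕ → Fin n) (j i k : ℕ) : Prop :=
  i < j ∧ k ≤ t - j ∧
    (∀ s : ℕ, 1 ≤ s → s ≤ t → (s < j - i - 1 ∨ j + k + 1 < s) →
      IsMaxSCadetWindow S T t v s s) ∧
    IsMaxSCadetWindow S T t v (j - i) (j + k) ∧
    (j - i ≠ 1 → IsMaxSCadetWindow S T t v (j - i - 1) (j - 1)) ∧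
    (j - i = 1 → i = 0) ∧
    (j + k ≠ t → IsMaxSCadetWindow S T t v (j + 1) (j + k + 1)) ∧
    (j + k = t → k = 0) ∧
    ∀ a' b' : ℕ, IsMaxSCadetWindow S T t v a' b' →
      ((a' = b' ∧ (a' < j - i - 1 ∨ j + k + 1 < a')) ∨ (a' = j - i ∧ b' = j + k) ∨
        (j - i ≠ 1 ∧ a' = j - i - 1 ∧ b' = j - 1) ∨ (j + k ≠ t ∧ a' = j + 1 ∧ b' = j + k + 1))

/-! The boxings of `X` are its partitions into `S`-cadet windows. Every `S`-window of `X` lies in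
some `X_r`, and the `X_r` are ordered by both endpoints, so `X_1` starts at `v 1` and `X_{k'}`
ends at `v k`. If `X_2` did not start at `v 2`, every `S`-window starting at `v 2` would extend
by `v 1`; then merging `{v 1}` into the block of `v 2`, or splitting it off, is an involution on
boxings that changes the number of blocks by one, so `r_S(X) = 0`. The other end is symmetric.
-/

open Finset

namespace PlaneTree

variable {n m : ℕ} {T : PlaneTree n m}

theorem IsCadet.right_unique {u x y : Fin n} (hx : T.IsCadet u x) (hy : T.IsCadet u y) :
    x = y :=
  T.pos_inj x y hx.1.1 hy.1.1 (hx.1.2.trans hy.1.2.symm) (le_antisymm (hy.2 x hx.1) (hx.2 y hy.1))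

theorem exists_isCadet_of_isChild {u z : Fin n} (h : T.IsChild z u) : ∃ x, T.IsCadet u x := by
  obtain ⟨x, hx, hmax⟩ := exists_max_image {w | T.IsChild w u} T.pos ⟨z, by simpa using h⟩
  exact ⟨x, by simpa using hx, fun w hw => hmax w (by simpa using hw)⟩

theorem eq_root_of_iterate_parent_eq {x : Fin n} {j : ℕ} (hj : 0 < j)
    (h : T.parent^[j] x = x) : x = T.root := by
  obtain ⟨K, hK⟩ := T.reaches_root x
  have hperiodic : T.parent^[j * K] x = x := (Function.IsPeriodicPt.mul_const h K).eq
  rw [← hperiodic, ← Nat.sub_add_cancel (Nat.le_mul_of_pos_left K hj),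
    Function.iterate_add_apply, hK, Function.iterate_fixed T.parent_root]

end PlaneTree

section CadetWindow

variable {n m : ℕ} {T : PlaneTree n m} {S : Fin n → Fin n → Finset ℤ} {v w : ℕ → Fin n}

theorem IsCadetWindow.mono {a b a' b' : ℕ} (h : IsCadetWindow T v a b) (ha : a ≤ a')
    (hab : a' ≤ b') (hb : b' ≤ b) : IsCadetWindow T v a' b' :=
  ⟨h.1.trans ha, hab, fun p hp1 hp2 => h.2.2 p (by omega) (by omega)⟩

theorem IsSCadetWindow.mono {a b a' b' : ℕ} (h : IsSCadetWindow S T v a b) (ha : a ≤ a')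
    (hab : a' ≤ b') (hb : b' ≤ b) : IsSCadetWindow S T v a' b' :=
  ⟨h.1.mono ha hab hb, fun i j hi hij hj => h.2 i j (by omega) hij (by omega)⟩

theorem isSCadetWindow_self {c : ℕ} (hc : 1 ≤ c) : IsSCadetWindow S T v c c :=
  ⟨⟨hc, le_rfl, fun _ _ _ => by omega⟩, fun _ _ _ _ _ => by omega⟩

theorem IsCadetWindow.iterate_parent {a b : ℕ} (hv : IsCadetWindow T v a b) {i : ℕ}
    (hi : i ≤ b - a) : T.parent^[i] (v (a + i)) = v a := by
  induction i with
  | zero => rfl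
  | succ i ih =>
    have hcad := hv.2.2 (a + (i + 1)) (by omega) (by omega)
    rw [Function.iterate_succ_apply, hcad.1.2, show a + (i + 1) - 1 = a + i by omega,
      ih (by omega)]

theorem IsCadetWindow.injOn {a b : ℕ} (hv : IsCadetWindow T v a b) :
    Set.InjOn v (Icc a b) := by
  suffices ∀ p q, a ≤ p → p < q → q ≤ b → v p ≠ v q by
    intro p hp q hq hpq
    simp only [coe_Icc, Set.mem_Icc] at hp hq
    by_contra hne
    rcases Nat.lt_or_gt_of_ne hne with h | h
    exacts [this p q hp.1 h hq.2 hpq, this q p hq.1 h hp.2 hpq.symm]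
  intro p q hp hpq hq heq
  have hcycle : T.parent^[q - p] (v q) = v q := by
    have := (hv.mono hp hpq.le hq).iterate_parent (i := q - p) le_rfl
    rwa [show p + (q - p) = q by omega, heq] at this
  exact (hv.2.2 q (by omega) hq).1.1 (T.eq_root_of_iterate_parent_eq (by omega) hcycle)

theorem IsCadetWindow.windowInj {a b : ℕ} (hv : IsCadetWindow T v a b) : WindowInj v a b :=
  fun p q hp1 hp2 hq1 hq2 => hv.injOn (by simp [hp1, hp2]) (by simp [hq1, hq2])

theorem IsCadetWindow.card_image {a b : ℕ} (hv : IsCadetWindow T v a b) :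
    ((Icc a b).image v).card = b + 1 - a := by
  rw [card_image_of_injOn hv.injOn, Nat.card_Icc]

theorem IsCadetWindow.le_card {t : ℕ} (hv : IsCadetWindow T v 1 t) : t ≤ n := by
  have := card_le_univ ((Icc 1 t).image v)
  rwa [hv.card_image, Fintype.card_fin, Nat.add_sub_cancel] at this

theorem mem_image_Icc_iff {a b p q j : ℕ} (hinj : Set.InjOn v (Icc a b)) (hp : a ≤ p)
    (hq : q ≤ b) (hj : j ∈ Icc a b) : v j ∈ (Icc p q).image v ↔ p ≤ j ∧ j ≤ q := by
  have hsub : (Icc p q : Set ℕ) ⊆ Icc a b := by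
    simpa only [coe_Icc] using Set.Icc_subset_Icc hp hq
  rw [← mem_coe, coe_image, hinj.mem_image_iff hsub (mem_coe.2 hj), mem_coe, mem_Icc]

end CadetWindow

section Shift

variable {n m : ℕ} {T : PlaneTree n m} {S : Fin n → Fin n → Finset ℤ} {v w : ℕ → Fin n}

theorem sum_Icc_add_left {M : Type*} [AddCommMonoid M] (f : ℕ → M) (c x y : ℕ) :
    ∑ r ∈ Icc (c + x) (c + y), f r = ∑ r ∈ Icc x y, f (c + r) := by
  rw [← map_add_left_Icc, sum_map]
  rfl

theorem image_Icc_shift {a d p : ℕ} (h : ∀ i ≤ d, w (p + i) = v (a + i)) :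
    (Icc p (p + d)).image w = (Icc a (a + d)).image v := by
  have hIcc : ∀ c, Icc c (c + d) = (Icc 0 d).map (addLeftEmbedding c) := fun c => by
    rw [map_add_left_Icc, add_zero]
  simp only [hIcc, map_eq_image, image_image]
  exact image_congr fun i hi => h i (by simpa using hi)

theorem IsCadetWindow.shift {a d p : ℕ} (hv : IsCadetWindow T v a (a + d)) (hp : 1 ≤ p)
    (h : ∀ i ≤ d, w (p + i) = v (a + i)) : IsCadetWindow T w p (p + d) := by
  refine ⟨hp, by omega, fun q hq1 hq2 => ?_⟩
  obtain ⟨i, rfl⟩ : ∃ i, q = p + (i + 1) := ⟨q - p - 1, by omega⟩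
  have hcad := hv.2.2 (a + (i + 1)) (by omega) (by omega)
  rw [show p + (i + 1) - 1 = p + i by omega, h i (by omega), h (i + 1) (by omega)]
  rwa [show a + (i + 1) - 1 = a + i by omega] at hcad

theorem IsSCadetWindow.shift {a d p : ℕ} (hv : IsSCadetWindow S T v a (a + d)) (hp : 1 ≤ p)
    (h : ∀ i ≤ d, w (p + i) = v (a + i)) : IsSCadetWindow S T w p (p + d) := by
  refine ⟨hv.1.shift hp h, fun i j hi hij hj => ?_⟩
  obtain ⟨s, rfl⟩ : ∃ s, i = p + s := ⟨i - p, by omega⟩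
  obtain ⟨t, rfl⟩ : ∃ t, j = p + t := ⟨j - p, by omega⟩
  have hsum : ∑ r ∈ Icc (p + s + 1) (p + t), T.lsib (w r) =
      ∑ r ∈ Icc (a + s + 1) (a + t), T.lsib (v r) := by
    rw [add_assoc, add_assoc, sum_Icc_add_left, sum_Icc_add_left]
    exact sum_congr rfl fun r hr => by rw [h r (by simp at hr; omega)]
  rw [h s (by omega), h t (by omega), hsum]
  exact hv.2 _ _ (by omega) (by omega) (by omega)

theorem IsCadetWindow.exists_shift_of_subset {a b c d : ℕ} (hv : IsCadetWindow T v a b)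
    (hw : IsCadetWindow T w c d)
    (hsub : ∀ i, c ≤ i → i ≤ d → ∃ j, a ≤ j ∧ j ≤ b ∧ v j = w i) :
    ∃ p, a ≤ p ∧ p + (d - c) ≤ b ∧ ∀ i ≤ d - c, w (c + i) = v (p + i) := by
  obtain ⟨p, hpa, hpb, hp⟩ := hsub c le_rfl hw.2.1
  suffices h : ∀ i ≤ d - c, p + i ≤ b ∧ w (c + i) = v (p + i) from
    ⟨p, hpa, (h _ le_rfl).1, fun i hi => (h i hi).2⟩
  intro i hi
  induction i with
  | zero => exact ⟨hpb, hp.symm⟩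
  | succ i ih =>
    obtain ⟨hib, hwi⟩ := ih (by omega)
    obtain ⟨j, hja, hjb, hj⟩ := hsub (c + (i + 1)) (by omega) (by omega)
    have hchild : T.IsChild (v j) (v (p + i)) := by
      have := (hw.2.2 (c + (i + 1)) (by omega) (by omega)).1
      rwa [show c + (i + 1) - 1 = c + i by omega, hwi, ← hj] at this
    rcases hja.eq_or_lt with hja | hja
    · -- `v a` would be its own proper ancestor
      subst hja
      have hcycle : T.parent^[(p + i - a) + 1] (v a) = v a := by
        rw [Function.iterate_succ_apply, hchild.2]
        simpa only [show a + (p + i - a) = p + i by omega] using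
          hv.iterate_parent (i := p + i - a) (by omega)
      exact absurd (T.eq_root_of_iterate_parent_eq (Nat.succ_pos _) hcycle) hchild.1
    · have hparent : v (j - 1) = v (p + i) := (hv.2.2 j hja hjb).1.2.symm.trans hchild.2
      have hj' : j - 1 = p + i :=
        hv.injOn (by simp; omega) (by simp; omega) hparent
      exact ⟨by omega, by rw [← hj]; congr 1; omega⟩

theorem isSBox_image {p q : ℕ} (hw : IsSCadetWindow S T v p q) :
    IsSBox S T ((Icc p q).image v) := by
  have hshift : ∀ i ≤ q - p, v (p + (1 + i) - 1) = v (p + i) := fun i _ => by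
    congr 1; omega
  have hq : p + (q - p) = q := by have := hw.1.2.1; omega
  have hw' := (hq.symm ▸ hw : IsSCadetWindow S T v p (p + (q - p))).shift
    (w := fun i => v (p + i - 1)) le_rfl hshift
  exact ⟨_, _, hw', hw'.1.windowInj, by rw [image_Icc_shift hshift, hq]⟩

theorem IsSBox.exists_window {k : ℕ} {Y : Finset (Fin n)} (hY : IsSBox S T Y)
    (hv : IsCadetWindow T v 1 k) (hsub : Y ⊆ (Icc 1 k).image v) :
    ∃ p q, 1 ≤ p ∧ q ≤ k ∧ IsSCadetWindow S T v p q ∧ Y = (Icc p q).image v := by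
  obtain ⟨k₀, v₀, hw, -, rfl⟩ := hY
  obtain ⟨p, hp, hpk, hshift⟩ := hv.exists_shift_of_subset hw.1 fun i hi1 hi2 => by
    obtain ⟨j, hj, hji⟩ := mem_image.1 (hsub (mem_image_of_mem v₀ (mem_Icc.2 ⟨hi1, hi2⟩)))
    exact ⟨j, (mem_Icc.1 hj).1, (mem_Icc.1 hj).2, hji⟩
  have hshift' : ∀ i ≤ k₀ - 1, v (p + i) = v₀ (1 + i) := fun i hi => (hshift i hi).symm
  have hk₀ : 1 + (k₀ - 1) = k₀ := by have := hw.1.2.1; omega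
  refine ⟨p, p + (k₀ - 1), hp, hpk, (hk₀ ▸ hw).shift hp hshift', ?_⟩
  rw [image_Icc_shift hshift', hk₀]

end Shift

section Maximal

variable {n m : ℕ} {T : PlaneTree n m} {S : Fin n → Fin n → Finset ℤ} {v : ℕ → Fin n}

theorem IsCadetWindow.snoc {a b : ℕ} {c : Fin n} (hv : IsCadetWindow T v a b)
    (hc : T.IsCadet (v b) c) : IsCadetWindow T (fun i => if i ≤ b then v i else c) a (b + 1) := by
  refine ⟨hv.1, by have := hv.2.1; omega, fun p hp1 hp2 => ?_⟩
  rcases hp2.eq_or_lt with rfl | hp2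
  · simpa using hc
  · simpa [show p ≤ b by omega, show p - 1 ≤ b by omega] using hv.2.2 p hp1 (by omega)

theorem IsCadetWindow.cons {b : ℕ} {u : Fin n} (hv : IsCadetWindow T v 1 b)
    (hu : T.IsCadet u (v 1)) :
    IsCadetWindow T (fun i => if i ≤ 1 then u else v (i - 1)) 1 (b + 1) := by
  refine ⟨le_rfl, by omega, fun p hp1 hp2 => ?_⟩
  rcases (show p = 2 ∨ 2 < p by omega) with rfl | hp
  · simpa using hu
  · simpa [show ¬ p ≤ 1 by omega, show ¬ p - 1 ≤ 1 by omega] using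
      hv.2.2 (p - 1) (by omega) (by omega)

theorem IsCadetWindow.exists_isMaxCadetSeq {k : ℕ} (hv : IsCadetWindow T v 1 k) :
    ∃ t w o, IsMaxCadetSeq T t w ∧ k + o ≤ t ∧
      ∀ i, 1 ≤ i → i ≤ k → w (i + o) = v i := by
  let Ext : ℕ → Prop := fun t => ∃ w o, IsCadetWindow T w 1 t ∧ k + o ≤ t ∧
    ∀ i, 1 ≤ i → i ≤ k → w (i + o) = v i
  have hle : ∀ t, Ext t → t ≤ n := fun t ⟨_, _, hw, _⟩ => hw.le_card
  have hk : Ext k := ⟨v, 0, hv, le_rfl, fun _ _ _ => rfl⟩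
  -- a longest extension is maximal; lengths are bounded since cadet windows are injective
  obtain ⟨w, o, hw, hko, hwv⟩ : Ext (Nat.findGreatest Ext n) :=
    Nat.findGreatest_spec (hle k hk) hk
  set t := Nat.findGreatest Ext n
  have hmax : ¬ Ext (t + 1) := fun h => by
    have := Nat.le_findGreatest (hle _ h) h
    omega
  refine ⟨t, w, o, ⟨hw, fun z hz => ?_, fun u hu => ?_⟩, hko, hwv⟩
  · obtain ⟨c, hc⟩ := T.exists_isCadet_of_isChild hz
    exact hmax ⟨_, o, hw.snoc hc, by omega, fun i hi1 hi2 => by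
      simp [show i + o ≤ t by omega, hwv i hi1 hi2]⟩
  · exact hmax ⟨_, o + 1, hw.cons hu, by omega, fun i hi1 hi2 => by
      simp [show ¬ i + (o + 1) ≤ 1 by omega, show i + (o + 1) - 1 = i + o by omega,
        hwv i hi1 hi2]⟩

theorem IsSCadetWindow.exists_isMaxSCadetWindow {t p q : ℕ} (hw : IsSCadetWindow S T v p q)
    (hq : q ≤ t) : ∃ a b, IsMaxSCadetWindow S T t v a b ∧ a ≤ p ∧ q ≤ b := by
  set b := Nat.findGreatest (IsSCadetWindow S T v p) t
  have hb : IsSCadetWindow S T v p b := Nat.findGreatest_spec hq hw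
  have hexa : ∃ a, IsSCadetWindow S T v a b := ⟨p, hb⟩
  set a := Nat.find hexa
  have hap : a ≤ p := Nat.find_min' hexa hb
  refine ⟨a, b, ⟨Nat.findGreatest_le t, Nat.find_spec hexa, ?_, ?_⟩, hap,
    Nat.le_findGreatest hq hw⟩
  · have := (Nat.find_spec hexa).1.1
    exact (eq_or_lt_of_le this).imp Eq.symm fun h => Nat.find_min hexa (by omega)
  · refine (Nat.findGreatest_le t).eq_or_lt.imp id fun hbt hext => ?_
    have := Nat.le_findGreatest hbt (hext.mono hap (by have := hb.1.2.1; omega) le_rfl)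
    omega

theorem IsSCadetWindow.exists_isMaxSCadetSet {k p q : ℕ} (hv : IsCadetWindow T v 1 k)
    (hw : IsSCadetWindow S T v p q) (hq : q ≤ k) :
    ∃ Y, IsMaxSCadetSet S T Y ∧ (Icc p q).image v ⊆ Y := by
  obtain ⟨t, w, o, hmax, hkt, hwv⟩ := hv.exists_isMaxCadetSeq
  have hp := hw.1.1
  have hq' : p + (q - p) = q := by have := hw.1.2.1; omega
  have hshift : ∀ i ≤ q - p, w (p + o + i) = v (p + i) := fun i hi => by
    rw [show p + o + i = p + i + o by omega]
    exact hwv _ (by omega) (by omega)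
  obtain ⟨a, b, hab, ha, hb⟩ :=
    ((hq' ▸ hw).shift (by omega) hshift).exists_isMaxSCadetWindow (t := t) (by omega)
  refine ⟨_, ⟨t, w, a, b, hmax, hmax.1.windowInj, hab, rfl⟩, ?_⟩
  have himage := image_Icc_shift hshift
  rw [hq'] at himage
  exact himage ▸ image_subset_image (Icc_subset_Icc ha hb)

theorem IsMaxSCadetSet.exists_shift {k p q : ℕ} (hv : IsCadetWindow T v 1 k) (hp : 1 ≤ p)
    (hpq : p ≤ q) (hq : q ≤ k) (hY : IsMaxSCadetSet S T ((Icc p q).image v)) :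
    ∃ t w a, IsMaxCadetSeq T t w ∧ IsMaxSCadetWindow S T t w a (a + (q - p)) ∧
      ∀ i ≤ q - p, w (a + i) = v (p + i) := by
  obtain ⟨t, w, a, b, hmax, -, hab, heq⟩ := hY
  have hvpq := hv.mono hp hpq hq
  have hw : IsCadetWindow T w a b := hab.2.1.1
  obtain ⟨p', hp', hp'q, hshift⟩ := hvpq.exists_shift_of_subset hw fun i hi1 hi2 => by
    obtain ⟨j, hj, hji⟩ := mem_image.1 (heq ▸ mem_image_of_mem w (mem_Icc.2 ⟨hi1, hi2⟩))
    exact ⟨j, (mem_Icc.1 hj).1, (mem_Icc.1 hj).2, hji⟩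
  have hcard := congrArg card heq
  rw [hvpq.card_image, hw.card_image] at hcard
  have hb : b = a + (q - p) := by have := hw.2.1; omega
  refine ⟨t, w, a, hmax, hb ▸ hab, fun i hi => ?_⟩
  rw [hshift i (by omega), show p' = p by omega]

theorem IsMaxSCadetSet.isSCadetWindow {k p q : ℕ} (hv : IsCadetWindow T v 1 k) (hp : 1 ≤ p)
    (hpq : p ≤ q) (hq : q ≤ k) (hY : IsMaxSCadetSet S T ((Icc p q).image v)) :
    IsSCadetWindow S T v p q := by
  obtain ⟨t, w, a, -, hab, hshift⟩ := hY.exists_shift hv hp hpq hq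
  simpa only [show p + (q - p) = q by omega] using
    hab.2.1.shift hp fun i hi => (hshift i hi).symm

theorem IsMaxSCadetSet.not_isSCadetWindow_succ {k p q : ℕ} (hv : IsCadetWindow T v 1 k)
    (hp : 1 ≤ p) (hpq : p ≤ q) (hq : q < k) (hY : IsMaxSCadetSet S T ((Icc p q).image v)) :
    ¬ IsSCadetWindow S T v p (q + 1) := by
  intro hext
  obtain ⟨t, w, a, hmax, hab, hshift⟩ := hY.exists_shift hv hp hpq hq.le
  have hwq : w (a + (q - p)) = v q := by rw [hshift _ le_rfl, show p + (q - p) = q by omega]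
  have hcad : T.IsCadet (v q) (v (q + 1)) := by simpa using hv.2.2 (q + 1) (by omega) (by omega)
  by_cases hend : a + (q - p) = t
  · exact hmax.2.1 _ (hend ▸ hwq ▸ hcad.1)
  · refine (hab.2.2.2.resolve_left hend) ?_
    have hnext : w (a + (q - p) + 1) = v (q + 1) := by
      have := hmax.1.2.2 (a + (q - p) + 1) (by have := hab.2.1.1.1; omega)
        (by have := hab.1; omega)
      rw [Nat.add_sub_cancel, hwq] at this
      exact this.right_unique hcad
    have hshift' : ∀ i ≤ q + 1 - p, w (a + i) = v (p + i) := fun i hi => by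
      rcases (show i ≤ q - p ∨ i = q - p + 1 by omega) with hi | rfl
      · exact hshift i hi
      · rw [← add_assoc, hnext, show p + (q - p + 1) = q + 1 by omega]
    have := ((show p + (q + 1 - p) = q + 1 by omega) ▸ hext).shift hab.2.1.1.1 hshift'
    rwa [show a + (q + 1 - p) = a + (q - p) + 1 by omega] at this

end Maximal

section Partition

variable {α : Type*} {good : Finset α → Prop} {X : Finset α} {B : Finset (Finset α)}
  {x y : α}

def IsPartitionInto (good : Finset α → Prop) (X : Finset α) (B : Finset (Finset α)) : Prop :=
  (∀ Y ∈ B, good Y ∧ Y ⊆ X) ∧ ∀ u ∈ X, ∃! Y, Y ∈ B ∧ u ∈ Y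

theorem IsPartitionInto.eq_of_mem (hB : IsPartitionInto good X B) {Y Z : Finset α} {u : α}
    (hY : Y ∈ B) (hZ : Z ∈ B) (huY : u ∈ Y) (huZ : u ∈ Z) : Y = Z :=
  (hB.2 u ((hB.1 Y hY).2 huY)).unique ⟨hY, huY⟩ ⟨hZ, huZ⟩

theorem IsPartitionInto.card_le (hB : IsPartitionInto good X B)
    (hne : ∀ Y, good Y → Y.Nonempty) : B.card ≤ X.card := by
  refine card_le_card_of_surjOn (fun u => if h : ∃ Y ∈ B, u ∈ Y then h.choose else ∅) ?_
  intro Y hY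
  obtain ⟨u, hu⟩ := hne Y (hB.1 Y hY).1
  have h : ∃ Y ∈ B, u ∈ Y := ⟨Y, hY, hu⟩
  refine ⟨u, (hB.1 Y hY).2 hu, ?_⟩
  simp only [dif_pos h]
  exact hB.eq_of_mem h.choose_spec.1 hY h.choose_spec.2 hu

variable [DecidableEq α]

def splitSingleton (x : α) (B : Finset (Finset α)) : Finset (Finset α) :=
  insert {x} (B.image (·.erase x))

def mergeSingleton (x y : α) (B : Finset (Finset α)) : Finset (Finset α) :=
  (B.erase {x}).image fun Y => if y ∈ Y then insert x Y else Y

/-- The hypotheses under which splitting `x` off its block, or merging the block `{x}` into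
the block of `y`, is an involution on partitions of `X` into `good` blocks. -/
structure IsTogglePair (good : Finset α → Prop) (X : Finset α) (x y : α) : Prop where
  ne : x ≠ y
  left_mem : x ∈ X
  right_mem : y ∈ X
  good_singleton : good {x}
  split : ∀ Y, good Y → Y ⊆ X → x ∈ Y → Y ≠ {x} → y ∈ Y ∧ good (Y.erase x)
  merge : ∀ Y, good Y → Y ⊆ X → y ∈ Y → x ∉ Y → good (insert x Y)

theorem singleton_mem_splitSingleton : {x} ∈ splitSingleton x B :=
  mem_insert_self _ _

theorem singleton_notMem_image_erase : {x} ∉ B.image (·.erase x) := fun hmem => by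
  obtain ⟨Y, -, hY⟩ := mem_image.1 hmem
  exact notMem_erase x Y (hY ▸ mem_singleton_self x)

theorem IsTogglePair.mem_iff_mem (h : IsTogglePair good X x y) (hB : IsPartitionInto good X B)
    (hx : {x} ∉ B) {Y : Finset α} (hY : Y ∈ B) : x ∈ Y ↔ y ∈ Y := by
  have hsplit : ∀ Y ∈ B, x ∈ Y → y ∈ Y := fun Y hY hxY =>
    (h.split Y (hB.1 Y hY).1 (hB.1 Y hY).2 hxY (ne_of_mem_of_not_mem hY hx)).1
  refine ⟨hsplit Y hY, fun hyY => ?_⟩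
  obtain ⟨Z, ⟨hZ, hxZ⟩, -⟩ := hB.2 x h.left_mem
  exact hB.eq_of_mem hZ hY (hsplit Z hZ hxZ) hyY ▸ hxZ

theorem IsTogglePair.isPartitionInto_splitSingleton (h : IsTogglePair good X x y)
    (hB : IsPartitionInto good X B) (hx : {x} ∉ B) :
    IsPartitionInto good X (splitSingleton x B) := by
  constructor
  · intro Z hZ
    rcases mem_insert.1 hZ with rfl | hZ
    · exact ⟨h.good_singleton, singleton_subset_iff.2 h.left_mem⟩
    obtain ⟨Y, hY, rfl⟩ := mem_image.1 hZ
    refine ⟨?_, (erase_subset x Y).trans (hB.1 Y hY).2⟩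
    by_cases hxY : x ∈ Y
    · exact (h.split Y (hB.1 Y hY).1 (hB.1 Y hY).2 hxY (ne_of_mem_of_not_mem hY hx)).2
    · rw [erase_eq_of_notMem hxY]
      exact (hB.1 Y hY).1
  · intro u hu
    by_cases hux : u = x
    · subst hux
      refine ⟨{u}, ⟨mem_insert_self _ _, mem_singleton_self _⟩, fun Z ⟨hZ, huZ⟩ => ?_⟩
      rcases mem_insert.1 hZ with rfl | hZ
      · rfl
      obtain ⟨Y, -, rfl⟩ := mem_image.1 hZ
      exact absurd huZ (notMem_erase _ _)
    obtain ⟨Y, ⟨hY, huY⟩, -⟩ := hB.2 u hu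
    refine ⟨Y.erase x, ⟨mem_insert_of_mem (mem_image_of_mem _ hY),
      mem_erase.2 ⟨hux, huY⟩⟩, fun Z ⟨hZ, huZ⟩ => ?_⟩
    rcases mem_insert.1 hZ with rfl | hZ
    · exact absurd (mem_singleton.1 huZ) hux
    obtain ⟨Y', hY', rfl⟩ := mem_image.1 hZ
    rw [hB.eq_of_mem hY' hY (mem_of_mem_erase huZ) huY]

theorem IsTogglePair.card_splitSingleton (h : IsTogglePair good X x y)
    (hB : IsPartitionInto good X B)
    (hx : {x} ∉ B) : (splitSingleton x B).card = B.card + 1 := by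
  rw [splitSingleton, card_insert_of_notMem singleton_notMem_image_erase, card_image_of_injOn]
  intro Y hY Z hZ hYZ
  simp only at hYZ
  by_cases hyY : y ∈ Y
  · have hyZ : y ∈ Z := mem_of_mem_erase (hYZ ▸ mem_erase.2 ⟨h.ne.symm, hyY⟩)
    exact hB.eq_of_mem hY hZ hyY hyZ
  · have hyZ : y ∉ Z := fun hyZ =>
      hyY (mem_of_mem_erase (hYZ ▸ mem_erase.2 ⟨h.ne.symm, hyZ⟩))
    rwa [erase_eq_of_notMem (mt (h.mem_iff_mem hB hx hY).1 hyY),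
      erase_eq_of_notMem (mt (h.mem_iff_mem hB hx hZ).1 hyZ)] at hYZ

theorem IsTogglePair.mergeSingleton_splitSingleton (h : IsTogglePair good X x y)
    (hB : IsPartitionInto good X B)
    (hx : {x} ∉ B) : mergeSingleton x y (splitSingleton x B) = B := by
  rw [mergeSingleton, splitSingleton, erase_insert singleton_notMem_image_erase, image_image]
  conv_rhs => rw [← image_id (s := B)]
  refine image_congr fun Y hY => ?_
  by_cases hyY : y ∈ Y
  · have hxY : x ∈ Y := (h.mem_iff_mem hB hx hY).2 hyY
    simp [mem_erase.2 ⟨h.ne.symm, hyY⟩, insert_erase hxY]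
  · have hxY : x ∉ Y := mt (h.mem_iff_mem hB hx hY).1 hyY
    simp [erase_eq_of_notMem hxY, hyY]

theorem IsTogglePair.isPartitionInto_mergeSingleton (h : IsTogglePair good X x y)
    (hB : IsPartitionInto good X B) (hx : {x} ∈ B) :
    IsPartitionInto good X (mergeSingleton x y B) := by
  have hxY : ∀ Y ∈ B, Y ≠ {x} → x ∉ Y := fun Y hY hne hxY =>
    hne (hB.eq_of_mem hY hx hxY (mem_singleton_self x))
  constructor
  · intro Z hZ
    obtain ⟨Y, hY, rfl⟩ := mem_image.1 hZ
    obtain ⟨hne, hY⟩ := mem_erase.1 hY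
    split_ifs with hyY
    · exact ⟨h.merge Y (hB.1 Y hY).1 (hB.1 Y hY).2 hyY (hxY Y hY hne),
        insert_subset h.left_mem (hB.1 Y hY).2⟩
    · exact hB.1 Y hY
  · intro u hu
    by_cases hux : u = x
    · subst hux
      obtain ⟨Y, ⟨hY, hyY⟩, -⟩ := hB.2 y h.right_mem
      have hne : Y ≠ {u} := fun hY => h.ne (mem_singleton.1 (hY ▸ hyY)).symm
      refine ⟨insert u Y, ⟨mem_image.2 ⟨Y, mem_erase.2 ⟨hne, hY⟩, if_pos hyY⟩,
        mem_insert_self _ _⟩, fun Z ⟨hZ, huZ⟩ => ?_⟩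
      obtain ⟨Y', hY', rfl⟩ := mem_image.1 hZ
      obtain ⟨hne', hY'⟩ := mem_erase.1 hY'
      split_ifs at huZ ⊢ with hyY'
      · rw [hB.eq_of_mem hY' hY hyY' hyY]
      · exact absurd huZ (hxY Y' hY' hne')
    obtain ⟨Y, ⟨hY, huY⟩, -⟩ := hB.2 u hu
    have hne : Y ≠ {x} := fun hY => hux (mem_singleton.1 (hY ▸ huY))
    have hmem : ∀ Y' : Finset α, u ∈ (if y ∈ Y' then insert x Y' else Y') ↔ u ∈ Y' :=
      fun Y' => by split_ifs <;> simp [hux]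
    refine ⟨_, ⟨mem_image.2 ⟨Y, mem_erase.2 ⟨hne, hY⟩, rfl⟩, (hmem Y).2 huY⟩,
      fun Z ⟨hZ, huZ⟩ => ?_⟩
    obtain ⟨Y', hY', rfl⟩ := mem_image.1 hZ
    rw [hB.eq_of_mem (mem_of_mem_erase hY') hY ((hmem Y').1 huZ) huY]

theorem IsTogglePair.card_mergeSingleton (h : IsTogglePair good X x y)
    (hB : IsPartitionInto good X B)
    (hx : {x} ∈ B) : (mergeSingleton x y B).card + 1 = B.card := by
  have hy : ∀ Y : Finset α, y ∈ (if y ∈ Y then insert x Y else Y) ↔ y ∈ Y := fun Y => by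
    split_ifs <;> simp [h.ne.symm]
  rw [mergeSingleton, card_image_of_injOn, card_erase_add_one hx]
  intro Y hY Z hZ hYZ
  simp only at hYZ
  by_cases hyY : y ∈ Y
  · have hyZ : y ∈ Z := (hy Z).1 (hYZ ▸ (hy Y).2 hyY)
    exact hB.eq_of_mem (mem_of_mem_erase hY) (mem_of_mem_erase hZ) hyY hyZ
  · have hyZ : y ∉ Z := fun hyZ => hyY ((hy Y).1 (hYZ ▸ (hy Z).2 hyZ))
    simpa [hyY, hyZ] using hYZ

theorem IsPartitionInto.splitSingleton_mergeSingleton (hB : IsPartitionInto good X B)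
    (hx : {x} ∈ B) : splitSingleton x (mergeSingleton x y B) = B := by
  rw [splitSingleton, mergeSingleton, image_image]
  conv_rhs => rw [← insert_erase hx, ← image_id (s := B.erase {x})]
  refine congrArg _ (image_congr fun Y hY => ?_)
  obtain ⟨hne, hY⟩ := mem_erase.1 hY
  have hxY : x ∉ Y := fun hxY => hne (hB.eq_of_mem hY hx hxY (mem_singleton_self x))
  simp only [Function.comp_apply, id]
  split_ifs <;> simp [erase_insert hxY, erase_eq_of_notMem hxY]

theorem singleton_notMem_mergeSingleton (hxy : x ≠ y) : {x} ∉ mergeSingleton x y B :=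
    fun hmem => by
  obtain ⟨Y, hY, hYx⟩ := mem_image.1 hmem
  split_ifs at hYx with hyY
  · exact hxy (mem_singleton.1 (hYx ▸ mem_insert_of_mem hyY)).symm
  · exact (mem_erase.1 hY).1 hYx

theorem IsTogglePair.sum_sign_eq_zero [Fintype α] (h : IsTogglePair good X x y)
    (hne : ∀ Y, good Y → Y.Nonempty) :
    ∑ B : Finset (Finset α),
      (if IsPartitionInto good X B then (-1 : ℤ) ^ (X.card - B.card) else 0) = 0 := by
  let toggle := fun B => if {x} ∈ B then mergeSingleton x y B else splitSingleton x B
  have key : ∀ B, IsPartitionInto good X B → IsPartitionInto good X (toggle B) ∧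
      toggle (toggle B) = B ∧
      ((toggle B).card + 1 = B.card ∨ (toggle B).card = B.card + 1) := by
    intro B hB
    by_cases hx : {x} ∈ B
    · simp only [toggle, if_pos hx, if_neg (singleton_notMem_mergeSingleton h.ne)]
      exact ⟨h.isPartitionInto_mergeSingleton hB hx, hB.splitSingleton_mergeSingleton hx,
        Or.inl (h.card_mergeSingleton hB hx)⟩
    · simp only [toggle, if_neg hx, if_pos singleton_mem_splitSingleton]
      exact ⟨h.isPartitionInto_splitSingleton hB hx, h.mergeSingleton_splitSingleton hB hx,
        Or.inr (h.card_splitSingleton hB hx)⟩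
  rw [← sum_filter]
  refine sum_involution (fun B _ => toggle B) (fun B hB => ?_) (fun B hB _ hfix => ?_)
    (fun B hB => ?_) (fun B hB => (key B (mem_filter.1 hB).2).2.1)
  · have hB := (mem_filter.1 hB).2
    have hle := hB.card_le hne
    have hle' := (key B hB).1.card_le hne
    rcases (key B hB).2.2 with hcard | hcard
    · rw [show X.card - (toggle B).card = X.card - B.card + 1 by omega, pow_succ]
      ring
    · rw [show X.card - B.card = X.card - (toggle B).card + 1 by omega, pow_succ]
      ring
  · have := (key B (mem_filter.1 hB).2).2.2
    rw [hfix] at this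
    omega
  · exact mem_filter.2 ⟨mem_univ _, (key B (mem_filter.1 hB).2).1⟩

end Partition

section Contribution

variable {n m : ℕ} {T : PlaneTree n m} {S : Fin n → Fin n → Finset ℤ} {v : ℕ → Fin n}
  {k : ℕ}

theorem IsSBox.nonempty {Y : Finset (Fin n)} (hY : IsSBox S T Y) : Y.Nonempty := by
  obtain ⟨k₀, v₀, hw, -, rfl⟩ := hY
  exact ⟨v₀ 1, mem_image_of_mem v₀ (mem_Icc.2 ⟨le_rfl, hw.1.2.1⟩)⟩

theorem isSBox_singleton {c : ℕ} (hc : 1 ≤ c) : IsSBox S T {v c} := by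
  simpa using isSBox_image (S := S) (T := T) (v := v) (isSCadetWindow_self hc)

theorem IsTogglePair.contrib_eq_zero {X : Finset (Fin n)} {x y : Fin n}
    (h : IsTogglePair (IsSBox S T) X x y) : contrib S T X = 0 :=
  h.sum_sign_eq_zero fun _ hY => hY.nonempty

theorem contrib_eq_zero_of_extend_left (hv : IsCadetWindow T v 1 k) (hk : 2 ≤ k)
    (hext : ∀ q, q ≤ k → IsSCadetWindow S T v 2 q → IsSCadetWindow S T v 1 q) :
    contrib S T ((Icc 1 k).image v) = 0 := by
  have hmem : ∀ {p q j}, 1 ≤ p → q ≤ k → 1 ≤ j → j ≤ k →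
      (v j ∈ (Icc p q).image v ↔ p ≤ j ∧ j ≤ q) := fun hp hq hj1 hj2 =>
    mem_image_Icc_iff hv.injOn hp hq (mem_Icc.2 ⟨hj1, hj2⟩)
  have hinsert : ∀ q, 1 ≤ q → insert (v 1) ((Icc 2 q).image v) = (Icc 1 q).image v :=
    fun q hq => by
      rw [← image_insert, show insert 1 (Icc 2 q) = Icc 1 q by
        simpa using insert_Icc_add_one_left_eq_Icc hq]
  refine IsTogglePair.contrib_eq_zero (x := v 1) (y := v 2) ⟨fun h => ?_,
    mem_image_of_mem v (by simp; omega), mem_image_of_mem v (by simp; omega),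
    isSBox_singleton le_rfl,
    fun Y hY hYX hxY hne => ?_, fun Y hY hYX hyY hxY => ?_⟩
  · have := hv.injOn (by simp; omega) (by simp; omega) h
    omega
  · obtain ⟨p, q, hp, hq, hw, rfl⟩ := hY.exists_window hv hYX
    obtain ⟨hp1, h1q⟩ := (hmem hp hq le_rfl (by omega)).1 hxY
    obtain rfl : p = 1 := by omega
    have hq2 : 2 ≤ q := by
      by_contra
      exact hne (by rw [show q = 1 by omega, Icc_self, image_singleton])
    refine ⟨(hmem le_rfl hq (by omega) hk).2 ⟨by omega, hq2⟩, ?_⟩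
    rw [← hinsert q (by omega), erase_insert fun h => by
      have := (hmem (by omega) hq le_rfl (by omega)).1 h; omega]
    exact isSBox_image (hw.mono (by omega) hq2 le_rfl)
  · obtain ⟨p, q, hp, hq, hw, rfl⟩ := hY.exists_window hv hYX
    obtain ⟨hp2, h2q⟩ := (hmem hp hq (by omega) hk).1 hyY
    obtain rfl : p = 2 := by
      by_contra
      exact hxY ((hmem hp hq le_rfl (by omega)).2 ⟨by omega, by omega⟩)
    rw [hinsert q (by omega)]
    exact isSBox_image (hext q hq hw)

theorem contrib_eq_zero_of_extend_right (hv : IsCadetWindow T v 1 k) (hk : 2 ≤ k)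
    (hext : ∀ p, 1 ≤ p → IsSCadetWindow S T v p (k - 1) → IsSCadetWindow S T v p k) :
    contrib S T ((Icc 1 k).image v) = 0 := by
  have hmem : ∀ {p q j}, 1 ≤ p → q ≤ k → 1 ≤ j → j ≤ k →
      (v j ∈ (Icc p q).image v ↔ p ≤ j ∧ j ≤ q) := fun hp hq hj1 hj2 =>
    mem_image_Icc_iff hv.injOn hp hq (mem_Icc.2 ⟨hj1, hj2⟩)
  have hinsert : ∀ p, p ≤ k → insert (v k) ((Icc p (k - 1)).image v) = (Icc p k).image v :=
    fun p hp => by rw [← image_insert, insert_Icc_sub_one_right_eq_Icc hp]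
  refine IsTogglePair.contrib_eq_zero (x := v k) (y := v (k - 1)) ⟨fun h => ?_,
    mem_image_of_mem v (by simp; omega), mem_image_of_mem v (by simp; omega),
    isSBox_singleton (by omega), fun Y hY hYX hxY hne => ?_, fun Y hY hYX hyY hxY => ?_⟩
  · have := hv.injOn (by simp; omega) (by simp; omega) h
    omega
  · obtain ⟨p, q, hp, hq, hw, rfl⟩ := hY.exists_window hv hYX
    obtain ⟨hpk, hkq⟩ := (hmem hp hq (by omega) le_rfl).1 hxY
    obtain rfl : q = k := by omega
    have hpk' : p ≤ q - 1 := by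
      by_contra
      exact hne (by rw [show p = q by omega, Icc_self, image_singleton])
    refine ⟨(hmem hp hq (by omega) (by omega)).2 ⟨hpk', by omega⟩, ?_⟩
    rw [← hinsert p hpk, erase_insert fun h => by
      have := (hmem hp (by omega) (by omega) le_rfl).1 h; omega]
    exact isSBox_image (hw.mono le_rfl hpk' (by omega))
  · obtain ⟨p, q, hp, hq, hw, rfl⟩ := hY.exists_window hv hYX
    obtain ⟨hpk, hkq⟩ := (hmem hp hq (by omega) (by omega)).1 hyY
    obtain rfl : q = k - 1 := by
      by_contra
      exact hxY ((hmem hp hq (by omega) le_rfl).2 ⟨by omega, by omega⟩)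
    rw [hinsert p (by omega)]
    exact isSBox_image (hext p hp hw)

end Contribution

section Windows

variable {n m : ℕ} {T : PlaneTree n m} {S : Fin n → Fin n → Finset ℤ} {v : ℕ → Fin n}
  {k k' : ℕ} {a b : ℕ → ℕ}

theorem image_Icc_sdiff_image_Icc {p q p' q' : ℕ} (hinj : Set.InjOn v (Icc 1 k)) (hp' : 1 ≤ p')
    (hq' : q' ≤ k) (hp : 1 ≤ p) (hq : q ≤ k) :
    (Icc p q).image v \ (Icc p' q').image v = (Icc p q \ Icc p' q').image v := by
  ext u
  simp only [mem_sdiff, mem_image]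
  constructor
  · rintro ⟨⟨j, hj, rfl⟩, hnot⟩
    exact ⟨j, ⟨hj, fun hj' => hnot ⟨j, hj', rfl⟩⟩, rfl⟩
  · rintro ⟨j, ⟨hj, hj'⟩, rfl⟩
    refine ⟨⟨j, hj, rfl⟩, fun h => hj' ?_⟩
    rw [← mem_image, mem_image_Icc_iff hinj hp' hq' (by simp at hj ⊢; omega)] at h
    exact mem_Icc.2 h

theorem IsMaxSCadetSet.left_lt_of_right_lt {p q p' q' : ℕ} (hv : IsCadetWindow T v 1 k)
    (hp : 1 ≤ p) (hpq : p ≤ q) (hY : IsMaxSCadetSet S T ((Icc p q).image v))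
    (hp' : 1 ≤ p') (hpq' : p' ≤ q') (hq' : q' ≤ k)
    (hY' : IsMaxSCadetSet S T ((Icc p' q').image v))
    (hqq' : q < q') : p < p' := by
  by_contra hle
  exact hY.not_isSCadetWindow_succ hv hp hpq (by omega)
    ((hY'.isSCadetWindow hv hp' hpq' hq').mono (by omega) (by omega) hqq')

theorem IsSCadetWindow.exists_window_superset {p q : ℕ} (hv : IsCadetWindow T v 1 k)
    (hconn : ∀ Y, IsMaxSCadetSet S T Y →
      (Icc 1 k).image v ∩ Y = ∅ ∨ Y ⊆ (Icc 1 k).image v)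
    (hboxes : ∀ r, 1 ≤ r → r ≤ k' → 1 ≤ a r ∧ a r ≤ b r ∧ b r ≤ k ∧
      IsMaxSCadetSet S T ((Icc (a r) (b r)).image v))
    (hall : ∀ Z, IsMaxSCadetSet S T Z → Z ⊆ (Icc 1 k).image v →
      ∃ r, 1 ≤ r ∧ r ≤ k' ∧ Z = (Icc (a r) (b r)).image v)
    (hw : IsSCadetWindow S T v p q) (hq : q ≤ k) :
    ∃ r ∈ Set.Icc 1 k', a r ≤ p ∧ q ≤ b r := by
  have hp := hw.1.1
  have hpq := hw.1.2.1
  obtain ⟨Y, hY, hsub⟩ := hw.exists_isMaxSCadetSet hv hq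
  have hvp : v p ∈ Y := hsub (mem_image_of_mem v (mem_Icc.2 ⟨le_rfl, hpq⟩))
  have hvq : v q ∈ Y := hsub (mem_image_of_mem v (mem_Icc.2 ⟨hpq, le_rfl⟩))
  have hYX : Y ⊆ (Icc 1 k).image v := (hconn Y hY).resolve_left fun h => by
    have : v p ∈ (Icc 1 k).image v ∩ Y :=
      mem_inter.2 ⟨mem_image_of_mem v (mem_Icc.2 ⟨hp, by omega⟩), hvp⟩
    simp [h] at this
  obtain ⟨r, hr1, hrk, rfl⟩ := hall Y hY hYX
  obtain ⟨har, -, hbr, -⟩ := hboxes r hr1 hrk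
  have hmem := fun j (hj : j ∈ Icc 1 k) => mem_image_Icc_iff hv.injOn har hbr hj
  exact ⟨r, ⟨hr1, hrk⟩, ((hmem p (by simp; omega)).1 hvp).1,
    ((hmem q (by simp; omega)).1 hvq).2⟩

theorem start_eq_of_contrib_ne_zero (hv : IsCadetWindow T v 1 k) (hk' : 1 < k')
    (hcover : ∀ p q, IsSCadetWindow S T v p q → q ≤ k →
      ∃ r ∈ Set.Icc 1 k', a r ≤ p ∧ q ≤ b r)
    (hwin : ∀ r ∈ Set.Icc 1 k', IsSCadetWindow S T v (a r) (b r))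
    (ha : StrictMonoOn a (Set.Icc 1 k')) (hb2 : b 2 ≤ k)
    (hne : contrib S T ((Icc 1 k).image v) ≠ 0) : a 1 = 1 ∧ a 2 = 2 := by
  have h1 : 1 ∈ Set.Icc 1 k' := ⟨le_rfl, hk'.le⟩
  have h2 : 2 ∈ Set.Icc 1 k' := ⟨one_le_two, hk'⟩
  have ha12 : a 1 < a 2 := ha h1 h2 one_lt_two
  have hk : 2 ≤ k := by have := (hwin 1 h1).1.1; have := (hwin 2 h2).1.2.1; omega
  have ha1 : a 1 = 1 := by
    obtain ⟨r, hr, har, -⟩ := hcover 1 1 (isSCadetWindow_self le_rfl) (by omega)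
    have := ha.monotoneOn h1 hr hr.1
    have := (hwin 1 h1).1.1
    omega
  refine ⟨ha1, by_contra fun ha2 =>
    hne (contrib_eq_zero_of_extend_left hv hk fun q hq hw => ?_)⟩
  obtain ⟨r, hr, har, hbr⟩ := hcover 2 q hw hq
  -- every window but the first starts after `a 2 > 2`
  obtain rfl : r = 1 := by
    by_contra hr1
    have := ha.monotoneOn h2 hr (by have := hr.1; omega)
    omega
  exact (ha1 ▸ hwin 1 h1).mono le_rfl (by have := hw.1.2.1; omega) hbr

theorem end_eq_of_contrib_ne_zero (hv : IsCadetWindow T v 1 k) (hk' : 1 < k')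
    (hcover : ∀ p q, IsSCadetWindow S T v p q → q ≤ k →
      ∃ r ∈ Set.Icc 1 k', a r ≤ p ∧ q ≤ b r)
    (hwin : ∀ r ∈ Set.Icc 1 k', IsSCadetWindow S T v (a r) (b r))
    (hb : StrictMonoOn b (Set.Icc 1 k')) (hbk : b k' ≤ k)
    (hne : contrib S T ((Icc 1 k).image v) ≠ 0) : b k' = k ∧ b (k' - 1) = k - 1 := by
  have hlast : k' ∈ Set.Icc 1 k' := ⟨hk'.le, le_rfl⟩
  have hprev : k' - 1 ∈ Set.Icc 1 k' := ⟨by omega, by omega⟩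
  have hb12 : b (k' - 1) < b k' := hb hprev hlast (by omega)
  have hk : 2 ≤ k := by have := (hwin _ hprev).1.1; have := (hwin _ hprev).1.2.1; omega
  have hbk' : b k' = k := by
    obtain ⟨r, hr, -, hbr⟩ := hcover k k (isSCadetWindow_self (by omega)) le_rfl
    have := hb.monotoneOn hr hlast hr.2
    omega
  refine ⟨hbk', by_contra fun hbk1 =>
    hne (contrib_eq_zero_of_extend_right hv hk fun p hp hw => ?_)⟩
  obtain ⟨r, hr, har, hbr⟩ := hcover p (k - 1) hw (by omega)
  -- every window but the last ends before `b (k' - 1) < k - 1`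
  obtain rfl : r = k' := by
    by_contra hrk
    have := hb.monotoneOn hr hprev (by have := hr.2; omega)
    omega
  exact (hbk' ▸ hwin r hlast).mono har (by have := hw.1.2.1; omega) le_rfl

end Windows

theorem statement_5_general {n : ℕ} (S : Fin n → Fin n → Finset ℤ) (T : PlaneTree n (mOf S))
    (k : ℕ) (v : ℕ → Fin n)
    (hcad : IsCadetWindow T v 1 k)
    (hconn : SConnected S T ((Finset.Icc 1 k).image v))
    (k' : ℕ) (a b : ℕ → ℕ)
    (hboxes : ∀ r, 1 ≤ r → r ≤ k' → 1 ≤ a r ∧ a r ≤ b r ∧ b r ≤ k ∧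
      IsMaxSCadetSet S T ((Finset.Icc (a r) (b r)).image v))
    (hmono : ∀ r s, 1 ≤ r → r < s → s ≤ k' → b r < b s)
    (hall : ∀ Z, IsMaxSCadetSet S T Z → Z ⊆ (Finset.Icc 1 k).image v →
      ∃ r, 1 ≤ r ∧ r ≤ k' ∧ Z = (Finset.Icc (a r) (b r)).image v)
    (hk' : 1 < k')
    (hne : contrib S T ((Finset.Icc 1 k).image v) ≠ 0) :
    ((Finset.Icc (a 1) (b 1)).image v \ (Finset.Icc (a 2) (b 2)).image v).card = 1 ∧
    ((Finset.Icc (a k') (b k')).image v \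
      (Finset.Icc (a (k' - 1)) (b (k' - 1))).image v).card = 1 := by
  have hwin : ∀ r ∈ Set.Icc 1 k', IsSCadetWindow S T v (a r) (b r) := fun r hr => by
    obtain ⟨har, habr, hbr, hY⟩ := hboxes r hr.1 hr.2
    exact hY.isSCadetWindow hcad har habr hbr
  have hb : StrictMonoOn b (Set.Icc 1 k') := fun r hr s hs hrs => hmono r s hr.1 hrs hs.2
  have ha : StrictMonoOn a (Set.Icc 1 k') := fun r hr s hs hrs => by
    obtain ⟨har, habr, -, hYr⟩ := hboxes r hr.1 hr.2
    obtain ⟨has, habs, hbs, hYs⟩ := hboxes s hs.1 hs.2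
    exact hYr.left_lt_of_right_lt hcad har habr has habs hbs hYs (hb hr hs hrs)
  have hcover := fun p q (hw : IsSCadetWindow S T v p q) (hq : q ≤ k) =>
    hw.exists_window_superset hcad hconn.2.1 hboxes hall hq
  obtain ⟨-, hab1, -, -⟩ := hboxes 1 le_rfl hk'.le
  obtain ⟨-, -, hb2, -⟩ := hboxes 2 one_le_two hk'
  obtain ⟨hak1, -, -, -⟩ := hboxes (k' - 1) (by omega) (by omega)
  obtain ⟨-, habk, hbk, -⟩ := hboxes k' hk'.le le_rfl
  obtain ⟨ha1, ha2⟩ := start_eq_of_contrib_ne_zero hcad hk' hcover hwin ha hb2 hne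
  obtain ⟨hbk', hbk1⟩ := end_eq_of_contrib_ne_zero hcad hk' hcover hwin hb hbk hne
  have hb12 : b 1 < b 2 := hb ⟨le_rfl, hk'.le⟩ ⟨one_le_two, hk'⟩ one_lt_two
  have ha12 : a (k' - 1) < a k' := ha ⟨by omega, by omega⟩ ⟨hk'.le, le_rfl⟩ (by omega)
  constructor
  · rw [ha1, ha2, image_Icc_sdiff_image_Icc hcad.injOn one_le_two hb2 le_rfl
      (hb12.le.trans hb2), show Icc 1 (b 1) \ Icc 2 (b 2) = {1} by ext; simp; omega]
    simp
  · rw [hbk', hbk1, image_Icc_sdiff_image_Icc hcad.injOn hak1 (Nat.sub_le k 1)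
      (hak1.trans ha12.le) le_rfl, show Icc (a k') k \ Icc (a (k' - 1)) (k - 1) = {k} by
        ext; simp; omega]
    simp

/-- Corollary 3.17: for an `S`-connected cadet sequence `(v 1, …, v k)`
with maximal `S`-cadet sequences `X_1, …, X_{k'}` (the windows `[a r, b r]`, in increasing
order of last index), if the contribution is nonzero and `k' > 1` then
`|X_1 \ X_2| = 1 = |X_{k'} \ X_{k'-1}|`. -/
theorem statement_5 {n : ℕ} (S : Fin n → Fin n → Finset ℤ) (T : PlaneTree n (mOf S))
    (k : ℕ) (v : ℕ → Fin n)
    (hcad : IsCadetWindow T v 1 k) (hinj : WindowInj v 1 k)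
    (hconn : SConnected S T ((Finset.Icc 1 k).image v))
    (k' : ℕ) (a b : ℕ → ℕ)
    (hboxes : ∀ r, 1 ≤ r → r ≤ k' → 1 ≤ a r ∧ a r ≤ b r ∧ b r ≤ k ∧
      IsMaxSCadetSet S T ((Finset.Icc (a r) (b r)).image v))
    (hmono : ∀ r s, 1 ≤ r → r < s → s ≤ k' → b r < b s)
    (hall : ∀ Z, IsMaxSCadetSet S T Z → Z ⊆ (Finset.Icc 1 k).image v →
      ∃ r, 1 ≤ r ∧ r ≤ k' ∧ Z = (Finset.Icc (a r) (b r)).image v)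
    (hk' : 1 < k')
    (hne : contrib S T ((Finset.Icc 1 k).image v) ≠ 0) :
    ((Finset.Icc (a 1) (b 1)).image v \ (Finset.Icc (a 2) (b 2)).image v).card = 1 ∧
    ((Finset.Icc (a k') (b k')).image v \
      (Finset.Icc (a (k' - 1)) (b (k' - 1))).image v).card = 1 :=
  statement_5_general S T k v hcad hconn k' a b hboxes hmono hall hk' hne
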